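/- arXiv:0901.4923 — 8 statements merged into one kernel-verified Lean document; each statement's English description precedes it below -/
import Mathlib

section
/- Let Γ be a simple graph of order n and minimum degree δ, and let k be an integer with -δ ≤ k ≤ δ such that Γ is partitionable into defensive k-alliances. Then ψ_k^d(Γ) ≤ ⌊2n/(δ+k+2)⌋ if δ+k is even, and ψ_k^d(Γ) ≤ ⌊2n/(δ+k+3)⌋ if δ+k is odd. -/
/-!
Each vertex `v` of a defensive `k`-alliance `S` has `δ ≤ deg v = δ_S(v) + δ_S̄(v) ≤ 2 δ_S(v) - k`,
and `δ_S(v) ≤ |S| - 1`; hence `δ + k + 2 ≤ 2|S|`, which parity sharpens to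
`δ + k + 3 ≤ 2|S|` when `δ + k` is odd.
Summing this over the `r` parts of a partition gives `r (δ + k + 2) ≤ 2n` (resp. `+ 3`).
-/

open Finset

/-- The number of neighbors that the vertex `v` has inside the set `S`. -/
def degIn {V : Type*} [Fintype V] [DecidableEq V] (G : SimpleGraph V) [DecidableRel G.Adj]
    (S : Finset V) (v : V) : ℕ :=
  (S.filter fun u => G.Adj v u).card

/-- `S` is a defensive `k`-alliance: `S` is nonempty and every vertex of `S` has at least
`k` more neighbors inside `S` than outside. -/
def IsDefensiveAlliance {V : Type*} [Fintype V] [DecidableEq V] (G : SimpleGraph V)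
    [DecidableRel G.Adj] (k : ℤ) (S : Finset V) : Prop :=
  S.Nonempty ∧ ∀ v ∈ S, (degIn G Sᶜ v : ℤ) + k ≤ (degIn G S v : ℤ)

/-- `S` is a dominating set: every vertex outside `S` has a neighbor in `S`. -/
def IsDominatingSet {V : Type*} [Fintype V] [DecidableEq V] (G : SimpleGraph V)
    (S : Finset V) : Prop :=
  ∀ v ∉ S, ∃ u ∈ S, G.Adj v u

/-- A global defensive `k`-alliance is a defensive `k`-alliance which is a dominating set. -/
def IsGlobalDefensiveAlliance {V : Type*} [Fintype V] [DecidableEq V] (G : SimpleGraph V)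
    [DecidableRel G.Adj] (k : ℤ) (S : Finset V) : Prop :=
  IsDefensiveAlliance G k S ∧ IsDominatingSet G S

/-- The defensive `k`-alliance number: the minimum cardinality of a defensive `k`-alliance. -/
noncomputable def defAllianceNum {V : Type*} [Fintype V] [DecidableEq V] (G : SimpleGraph V)
    [DecidableRel G.Adj] (k : ℤ) : ℕ :=
  sInf {s : ℕ | ∃ S : Finset V, IsDefensiveAlliance G k S ∧ S.card = s}

/-- The global defensive `k`-alliance number. -/
noncomputable def globalDefAllianceNum {V : Type*} [Fintype V] [DecidableEq V] (G : SimpleGraph V)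
    [DecidableRel G.Adj] (k : ℤ) : ℕ :=
  sInf {s : ℕ | ∃ S : Finset V, IsGlobalDefensiveAlliance G k S ∧ S.card = s}

/-- A partition of the vertex set all whose parts are defensive `k`-alliances. -/
def IsDefAlliancePartition {V : Type*} [Fintype V] [DecidableEq V] (G : SimpleGraph V)
    [DecidableRel G.Adj] (k : ℤ) (P : Finpartition (univ : Finset V)) : Prop :=
  ∀ S ∈ P.parts, IsDefensiveAlliance G k S

/-- A partition of the vertex set all whose parts are global defensive `k`-alliances. -/
def IsGlobalDefAlliancePartition {V : Type*} [Fintype V] [DecidableEq V] (G : SimpleGraph V)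
    [DecidableRel G.Adj] (k : ℤ) (P : Finpartition (univ : Finset V)) : Prop :=
  ∀ S ∈ P.parts, IsGlobalDefensiveAlliance G k S

/-- The defensive `k`-alliance partition number `ψₖᵈ`. -/
noncomputable def defPartitionNum {V : Type*} [Fintype V] [DecidableEq V] (G : SimpleGraph V)
    [DecidableRel G.Adj] (k : ℤ) : ℕ :=
  sSup {r : ℕ | ∃ P : Finpartition (univ : Finset V),
    IsDefAlliancePartition G k P ∧ P.parts.card = r}

/-- The global defensive `k`-alliance partition number `ψₖᵍᵈ`. -/
noncomputable def globalDefPartitionNum {V : Type*} [Fintype V] [DecidableEq V]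
    (G : SimpleGraph V) [DecidableRel G.Adj] (k : ℤ) : ℕ :=
  sSup {r : ℕ | ∃ P : Finpartition (univ : Finset V),
    IsGlobalDefAlliancePartition G k P ∧ P.parts.card = r}

section Alliance

variable {V : Type*} [Fintype V] [DecidableEq V] {G : SimpleGraph V} [DecidableRel G.Adj]

lemma degIn_add_degIn_compl (S : Finset V) (v : V) :
    degIn G S v + degIn G Sᶜ v = G.degree v := by
  rw [degIn, degIn, ← card_union_of_disjoint (disjoint_filter_filter disjoint_compl_right),
    ← filter_union, union_compl, SimpleGraph.degree, SimpleGraph.neighborFinset_eq_filter]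

lemma degIn_lt_card {S : Finset V} {v : V} (hv : v ∈ S) : degIn G S v < #S :=
  card_lt_card <| filter_ssubset.mpr ⟨v, hv, G.irrefl⟩

lemma IsDefensiveAlliance.minDegree_add_add_two_le {k : ℤ} {S : Finset V}
    (hS : IsDefensiveAlliance G k S) : (G.minDegree : ℤ) + k + 2 ≤ 2 * #S := by
  obtain ⟨⟨v, hv⟩, hdef⟩ := hS
  have hsplit : (degIn G S v : ℤ) + degIn G Sᶜ v = G.degree v := by
    exact_mod_cast degIn_add_degIn_compl S v
  have hmin : (G.minDegree : ℤ) ≤ G.degree v := by exact_mod_cast G.minDegree_le_degree v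
  have hlt : (degIn G S v : ℤ) < #S := by exact_mod_cast degIn_lt_card hv
  linarith [hdef v hv]

lemma IsDefensiveAlliance.minDegree_add_add_three_le {k : ℤ} {S : Finset V}
    (hS : IsDefensiveAlliance G k S) (hodd : Odd ((G.minDegree : ℤ) + k)) :
    (G.minDegree : ℤ) + k + 3 ≤ 2 * #S := by
  have := hS.minDegree_add_add_two_le
  rw [Int.odd_iff] at hodd
  omega

lemma Finpartition.card_parts_mul_le {α R : Type*} [DecidableEq α] [CommSemiring R]
    [PartialOrder R] [IsOrderedRing R] {s : Finset α} (P : Finpartition s) {a c : R}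
    (hc : ∀ t ∈ P.parts, c ≤ a * #t) : #P.parts * c ≤ a * #s := by
  calc (#P.parts : R) * c = #P.parts • c := (nsmul_eq_mul _ _).symm
    _ ≤ ∑ t ∈ P.parts, a * #t := card_nsmul_le_sum _ _ _ hc
    _ = a * #s := by rw [← mul_sum, ← P.sum_card_parts, Nat.cast_sum]

lemma defPartitionNum_mul_le {k c : ℤ}
    (hc : ∀ S : Finset V, IsDefensiveAlliance G k S → c ≤ 2 * #S) :
    (defPartitionNum G k : ℤ) * c ≤ 2 * Fintype.card V := by
  rw [defPartitionNum]
  set T := {r : ℕ | ∃ P : Finpartition (univ : Finset V),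
    IsDefAlliancePartition G k P ∧ #P.parts = r}
  rcases T.eq_empty_or_nonempty with hempty | hne
  · simp [hempty]
  · have hbdd : BddAbove T :=
      ⟨Fintype.card V, by rintro _ ⟨P, -, rfl⟩; exact P.card_parts_le_card⟩
    obtain ⟨P, hP, hcard⟩ := Nat.sSup_mem hne hbdd
    rw [← hcard, ← card_univ]
    exact P.card_parts_mul_le fun S hS => hc S (hP S hS)

end Alliance

theorem statement0_general {V : Type*} [Fintype V] [DecidableEq V]
    (G : SimpleGraph V) [DecidableRel G.Adj] (k : ℤ)
    (hk₁ : -(G.minDegree : ℤ) ≤ k) :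
    (Even ((G.minDegree : ℤ) + k) →
      (defPartitionNum G k : ℤ) ≤ 2 * (Fintype.card V : ℤ) / ((G.minDegree : ℤ) + k + 2)) ∧
    (Odd ((G.minDegree : ℤ) + k) →
      (defPartitionNum G k : ℤ) ≤ 2 * (Fintype.card V : ℤ) / ((G.minDegree : ℤ) + k + 3)) := by
  refine ⟨fun _ => ?_, fun hodd => ?_⟩
  · rw [Int.le_ediv_iff_mul_le (by omega)]
    exact defPartitionNum_mul_le fun S hS => hS.minDegree_add_add_two_le
  · rw [Int.le_ediv_iff_mul_le (by omega)]
    exact defPartitionNum_mul_le fun S hS => hS.minDegree_add_add_three_le hodd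

/-- If `Γ` (of order `n`, minimum degree `δ`) is partitionable into defensive `k`-alliances,
`-δ ≤ k ≤ δ`, then `ψₖᵈ(Γ) ≤ ⌊2n/(δ+k+2)⌋` when `δ+k` is even, and
`ψₖᵈ(Γ) ≤ ⌊2n/(δ+k+3)⌋` when `δ+k` is odd. -/
theorem statement0 {V : Type*} [Fintype V] [DecidableEq V] [Nonempty V]
    (G : SimpleGraph V) [DecidableRel G.Adj] (k : ℤ)
    (hk₁ : -(G.minDegree : ℤ) ≤ k) (hk₂ : k ≤ (G.minDegree : ℤ))
    (hpart : 2 ≤ defPartitionNum G k) :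
    (Even ((G.minDegree : ℤ) + k) →
      (defPartitionNum G k : ℤ) ≤ 2 * (Fintype.card V : ℤ) / ((G.minDegree : ℤ) + k + 2)) ∧
    (Odd ((G.minDegree : ℤ) + k) →
      (defPartitionNum G k : ℤ) ≤ 2 * (Fintype.card V : ℤ) / ((G.minDegree : ℤ) + k + 3)) :=
  statement0_general G k hk₁
end

section
/- Let Γ be a simple graph of order n that is partitionable into global defensive k-alliances. Then ψ_k^{gd}(Γ) ≤ ⌊(√(k²+4n) − k)/2⌋. -/
/-!
Take a partition of `V` into `r` global defensive `k`-alliances and a vertex `v` of a part `S`.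
Every other part dominates `v`, and distinct parts give distinct neighbours of `v` outside `S`,
so `r - 1 ≤ δ_{S̄}(v)`. Hence `r - 1 + k ≤ δ_S(v) ≤ |S| - 1`, i.e. `|S| ≥ r + k`; summing over the
`r` parts gives `r (r + k) ≤ n`, which is `2r + k ≤ √(k² + 4n)`.
-/

open Finset

section Alliances

variable {V : Type*} [Fintype V] [DecidableEq V] {G : SimpleGraph V} [DecidableRel G.Adj]

lemma card_parts_erase_le_degIn_compl (P : Finpartition (univ : Finset V))
    (hdom : ∀ T ∈ P.parts, IsDominatingSet G T) {S : Finset V} (hS : S ∈ P.parts) {v : V}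
    (hv : v ∈ S) : #(P.parts.erase S) ≤ degIn G Sᶜ v := by
  refine card_le_card_of_surjOn P.part fun T hT => ?_
  obtain ⟨hTS, hT⟩ := mem_erase.mp hT
  have hvT : v ∉ T := fun hvT => hTS (P.eq_of_mem_parts hT hS hvT hv)
  obtain ⟨u, huT, hvu⟩ := hdom T hT v hvT
  have huS : u ∉ S := fun huS => hTS (P.eq_of_mem_parts hT hS huT huS)
  exact ⟨u, mem_filter.mpr ⟨mem_compl.mpr huS, hvu⟩, P.part_eq_of_mem hT huT⟩

namespace IsGlobalDefAlliancePartition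

variable {k : ℤ} {P : Finpartition (univ : Finset V)}

theorem card_parts_add_le_card (hP : IsGlobalDefAlliancePartition G k P) {S : Finset V}
    (hS : S ∈ P.parts) : (#P.parts : ℤ) + k ≤ #S := by
  obtain ⟨⟨⟨v, hv⟩, hdef⟩, -⟩ := hP S hS
  have hout := card_parts_erase_le_degIn_compl P (fun T hT => (hP T hT).2) hS hv
  rw [card_erase_of_mem hS] at hout
  have hin := degIn_lt_card (G := G) hv
  have hdefv := hdef v hv
  have hpos : 0 < #P.parts := card_pos.mpr ⟨S, hS⟩
  omega

theorem card_parts_mul_le (hP : IsGlobalDefAlliancePartition G k P) :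
    (#P.parts : ℤ) * (#P.parts + k) ≤ Fintype.card V :=
  calc (#P.parts : ℤ) * (#P.parts + k) = ∑ _S ∈ P.parts, ((#P.parts : ℤ) + k) := by
        rw [sum_const, nsmul_eq_mul]
    _ ≤ ∑ S ∈ P.parts, (#S : ℤ) := sum_le_sum fun S hS => hP.card_parts_add_le_card hS
    _ = Fintype.card V := by exact_mod_cast P.sum_card_parts.trans card_univ

end IsGlobalDefAlliancePartition

variable (G) in
theorem globalDefPartitionNum_mul_le (k : ℤ) :
    (globalDefPartitionNum G k : ℤ) * (globalDefPartitionNum G k + k) ≤ Fintype.card V := by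
  set sizes := {r : ℕ | ∃ P : Finpartition (univ : Finset V),
    IsGlobalDefAlliancePartition G k P ∧ #P.parts = r}
  have hsup : globalDefPartitionNum G k = sSup sizes := rfl
  rcases sizes.eq_empty_or_nonempty with hempty | hne
  · simp [hsup, hempty]
  · have hbdd : BddAbove sizes := ⟨Fintype.card V, by
      rintro r ⟨P, -, rfl⟩
      simpa using P.card_parts_le_card⟩
    obtain ⟨P, hP, hcard⟩ := Nat.sSup_mem hne hbdd
    rw [hsup, ← hcard]
    exact hP.card_parts_mul_le

end Alliances

lemma le_floor_of_mul_add_le {r k : ℤ} {n : ℝ} (h : (r : ℝ) * (r + k) ≤ n) :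
    r ≤ ⌊(√((k : ℝ) ^ 2 + 4 * n) - k) / 2⌋ := by
  have hsqrt : 2 * (r : ℝ) + k ≤ √((k : ℝ) ^ 2 + 4 * n) := Real.le_sqrt_of_sq_le (by nlinarith)
  rw [Int.le_floor]
  linarith

theorem statement1_general {V : Type*} [Fintype V] [DecidableEq V]
    (G : SimpleGraph V) [DecidableRel G.Adj] (k : ℤ) :
    (globalDefPartitionNum G k : ℤ) ≤
      ⌊(Real.sqrt ((k : ℝ) ^ 2 + 4 * (Fintype.card V : ℝ)) - (k : ℝ)) / 2⌋ :=
  le_floor_of_mul_add_le (by exact_mod_cast globalDefPartitionNum_mul_le G k)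

/-- If `Γ` of order `n` is partitionable into global defensive `k`-alliances, then
`ψₖᵍᵈ(Γ) ≤ ⌊(√(k² + 4n) - k)/2⌋`. -/
theorem statement1 {V : Type*} [Fintype V] [DecidableEq V]
    (G : SimpleGraph V) [DecidableRel G.Adj] (k : ℤ)
    (hpart : 2 ≤ globalDefPartitionNum G k) :
    (globalDefPartitionNum G k : ℤ) ≤
      ⌊(Real.sqrt ((k : ℝ) ^ 2 + 4 * (Fintype.card V : ℝ)) - (k : ℝ)) / 2⌋ :=
  statement1_general G k
end

section
/- Let Γ be a simple graph admitting a partition {V_1,...,V_r} of its vertex set into r ≥ 2 global defensive k-alliances, and let C be the number of edges of Γ having endpoints in different sets of this partition. Then C ≥ (1/2) r (r−1) γ_k^d(Γ). -/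
open Finset

/-- The set of edges of `G` whose two endpoints lie in different parts of the partition `P`. -/
noncomputable def crossEdges {V : Type*} [Fintype V] [DecidableEq V] (G : SimpleGraph V)
    [DecidableRel G.Adj] (P : Finpartition (univ : Finset V)) : Finset (Sym2 V) :=
  @Finset.filter _ (fun e => ¬ ∃ S ∈ P.parts, ∀ v ∈ e, v ∈ S)
    (Classical.decPred _) G.edgeFinset

/-! Every vertex `v` is dominated by each of the `r - 1` parts not containing it, and these
neighbours are distinct, so `v` lies on at least `r - 1` crossing edges. Summing over `V` counts
every crossing edge twice, whence `2C ≥ |V| (r - 1)`, while `|V| ≥ r γ` since every part is a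
global defensive `k`-alliance. -/

namespace Finpartition

variable {V : Type*} [Fintype V] [DecidableEq V] (P : Finpartition (univ : Finset V))

def crossGraph (G : SimpleGraph V) : SimpleGraph V where
  Adj u v := G.Adj u v ∧ P.part u ≠ P.part v
  symm := ⟨fun _ _ h => ⟨h.1.symm, h.2.symm⟩⟩
  loopless := ⟨fun _ h => h.2 rfl⟩

variable {P} {G : SimpleGraph V} [DecidableRel G.Adj]

instance : DecidableRel (P.crossGraph G).Adj := fun _ _ => inferInstanceAs (Decidable (_ ∧ _))

lemma exists_mem_parts_mem_and_mem_iff (u v : V) :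
    (∃ S ∈ P.parts, u ∈ S ∧ v ∈ S) ↔ P.part u = P.part v := by
  rw [← mem_part_iff_exists, P.mem_part_iff_part_eq_part (mem_univ u) (mem_univ v)]

lemma crossEdges_eq_edgeFinset_crossGraph : crossEdges G P = (P.crossGraph G).edgeFinset := by
  ext e
  induction e using Sym2.ind with
  | _ u v =>
    simp only [crossEdges, mem_filter, SimpleGraph.mem_edgeFinset, SimpleGraph.mem_edgeSet,
      Sym2.mem_iff, forall_eq_or_imp, forall_eq, exists_mem_parts_mem_and_mem_iff]
    rfl

lemma card_parts_le_degree_crossGraph_add_one (hdom : ∀ S ∈ P.parts, IsDominatingSet G S)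
    (v : V) : #P.parts ≤ (P.crossGraph G).degree v + 1 := by
  have hv : P.part v ∈ P.parts := P.part_mem.2 (mem_univ v)
  rw [← card_erase_add_one hv, ← SimpleGraph.card_neighborFinset_eq_degree]
  gcongr
  refine card_le_card_of_surjOn P.part fun S hS => ?_
  obtain ⟨hSv, hS⟩ := mem_erase.1 hS
  obtain ⟨u, huS, hvu⟩ := hdom S hS v fun hvS => hSv (P.part_eq_of_mem hS hvS).symm
  have hu : P.part u = S := P.part_eq_of_mem hS huS
  refine ⟨u, ?_, hu⟩
  rw [mem_coe, SimpleGraph.mem_neighborFinset]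
  exact ⟨hvu, hu ▸ Ne.symm hSv⟩

lemma card_mul_card_parts_le (hdom : ∀ S ∈ P.parts, IsDominatingSet G S) :
    Fintype.card V * #P.parts ≤ 2 * #(crossEdges G P) + Fintype.card V := by
  calc Fintype.card V * #P.parts = ∑ _v : V, #P.parts := by simp
    _ ≤ ∑ v, ((P.crossGraph G).degree v + 1) :=
      sum_le_sum fun v _ => card_parts_le_degree_crossGraph_add_one hdom v
    _ = 2 * #(crossEdges G P) + Fintype.card V := by
      rw [sum_add_distrib, SimpleGraph.sum_degrees_eq_twice_card_edges,
        crossEdges_eq_edgeFinset_crossGraph]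
      simp

lemma card_parts_mul_globalDefAllianceNum_le {k : ℤ} (hP : IsGlobalDefAlliancePartition G k P) :
    #P.parts * globalDefAllianceNum G k ≤ Fintype.card V := by
  rw [← card_univ, ← P.sum_card_parts, ← smul_eq_mul]
  exact card_nsmul_le_sum _ _ _ fun S hS => Nat.sInf_le ⟨S, hP S hS, rfl⟩

end Finpartition

theorem statement4_general {V : Type*} [Fintype V] [DecidableEq V]
    (G : SimpleGraph V) [DecidableRel G.Adj] (k : ℤ) (r : ℕ)
    (P : Finpartition (univ : Finset V)) (hP : IsGlobalDefAlliancePartition G k P)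
    (hPr : P.parts.card = r) :
    (1 / 2 : ℚ) * r * ((r : ℚ) - 1) * (globalDefAllianceNum G k : ℚ) ≤
      ((crossEdges G P).card : ℚ) := by
  have hγ : (r * globalDefAllianceNum G k : ℚ) ≤ Fintype.card V := by
    exact_mod_cast hPr ▸ P.card_parts_mul_globalDefAllianceNum_le hP
  have hC : (Fintype.card V * r : ℚ) ≤ 2 * #(crossEdges G P) + Fintype.card V := by
    exact_mod_cast hPr ▸ P.card_mul_card_parts_le fun S hS => (hP S hS).2
  rcases Nat.eq_zero_or_pos r with rfl | hr
  · simp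
  have hr1 : (0 : ℚ) ≤ r - 1 := by rw [sub_nonneg]; exact_mod_cast hr
  nlinarith [mul_le_mul_of_nonneg_right hγ hr1]

/-- For a partition of `Γ` into `r ≥ 2` global defensive `k`-alliances, the number `C` of
edges with endpoints in different parts satisfies `C ≥ (1/2) r (r-1) γₖᵈ(Γ)`. -/
theorem statement4 {V : Type*} [Fintype V] [DecidableEq V]
    (G : SimpleGraph V) [DecidableRel G.Adj] (k : ℤ) (r : ℕ) (hr : 2 ≤ r)
    (P : Finpartition (univ : Finset V)) (hP : IsGlobalDefAlliancePartition G k P)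
    (hPr : P.parts.card = r) :
    (1 / 2 : ℚ) * r * ((r : ℚ) - 1) * (globalDefAllianceNum G k : ℚ) ≤
      ((crossEdges G P).card : ℚ) :=
  statement4_general G k r P hP hPr
end

section
/- Let Γ be a simple graph of order n and size m, admitting a partition {V_1,...,V_r} of its vertex set into r ≥ 2 global defensive k-alliances, and let C be the number of edges of Γ having endpoints in different sets of this partition. Then C ≤ (2m − nk)/4. -/
open Finset

/-!
Let `S` be the part containing a vertex `v`. The alliance condition
`δ_S(v) ≥ δ_{S̄}(v) + k` together with `δ_S(v) + δ_{S̄}(v) = deg v` gives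
`2 δ_{S̄}(v) + k ≤ deg v`. Summing over all vertices, the left-hand sides add up to `4C + nk`,
since every crossing edge is counted once from each endpoint, and the right-hand sides to `2m`.
-/

namespace SimpleGraph

variable {V : Type*} [Fintype V] [DecidableEq V] (G : SimpleGraph V) [DecidableRel G.Adj]

lemma degIn_add_degIn_compl (S : Finset V) (v : V) :
    degIn G S v + degIn G Sᶜ v = G.degree v := by
  rw [← card_neighborFinset_eq_degree, degIn, degIn,
    ← card_union_of_disjoint (disjoint_filter_filter disjoint_compl_right)]
  congr 1
  ext u
  simp only [mem_union, mem_filter, mem_compl, mem_neighborFinset]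
  tauto

def crossGraph (P : Finpartition (univ : Finset V)) : SimpleGraph V where
  Adj u v := G.Adj u v ∧ P.part u ≠ P.part v
  symm := ⟨fun _ _ h => ⟨h.1.symm, h.2.symm⟩⟩
  loopless := ⟨fun v h => G.loopless.irrefl v h.1⟩

instance (P : Finpartition (univ : Finset V)) : DecidableRel (G.crossGraph P).Adj :=
  fun u v => inferInstanceAs (Decidable (G.Adj u v ∧ P.part u ≠ P.part v))

variable (P : Finpartition (univ : Finset V))

lemma crossGraph_degree (v : V) : (G.crossGraph P).degree v = degIn G (P.part v)ᶜ v := by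
  rw [← card_neighborFinset_eq_degree, degIn]
  congr 1
  ext u
  simp only [mem_neighborFinset, mem_filter, mem_compl]
  simp only [crossGraph]
  constructor
  · rintro ⟨hvu, hne⟩
    exact ⟨fun hu => hne (P.part_eq_of_mem (P.part_mem.2 (mem_univ v)) hu).symm, hvu⟩
  · rintro ⟨hu, hvu⟩
    exact ⟨hvu, fun he => hu (he ▸ P.mem_part (mem_univ u))⟩

lemma crossEdges_eq_edgeFinset_crossGraph : crossEdges G P = (G.crossGraph P).edgeFinset := by
  ext e
  induction e using Sym2.inductionOn with
  | hf a b =>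
    simp only [crossEdges, mem_filter, mem_edgeFinset, mem_edgeSet, Sym2.mem_iff]
    simp only [crossGraph]
    refine and_congr_right fun _ => not_congr ⟨?_, ?_⟩
    · rintro ⟨S, hS, hmem⟩
      rw [P.part_eq_of_mem hS (hmem a (Or.inl rfl)), P.part_eq_of_mem hS (hmem b (Or.inr rfl))]
    · intro he
      refine ⟨P.part a, P.part_mem.2 (mem_univ a), ?_⟩
      rintro v (rfl | rfl)
      · exact P.mem_part (mem_univ v)
      · exact he ▸ P.mem_part (mem_univ v)

lemma sum_degIn_compl_part : ∑ v, degIn G (P.part v)ᶜ v = 2 * (crossEdges G P).card := by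
  simp_rw [← crossGraph_degree, crossEdges_eq_edgeFinset_crossGraph,
    sum_degrees_eq_twice_card_edges]

end SimpleGraph

section

variable {V : Type*} [Fintype V] [DecidableEq V] {G : SimpleGraph V} [DecidableRel G.Adj]

lemma IsDefensiveAlliance.two_mul_degIn_compl_add_le {k : ℤ} {S : Finset V}
    (hS : IsDefensiveAlliance G k S) {v : V} (hv : v ∈ S) :
    2 * (degIn G Sᶜ v : ℤ) + k ≤ G.degree v := by
  have hsplit := G.degIn_add_degIn_compl S v
  have halliance := hS.2 v hv
  omega

lemma IsDefAlliancePartition.four_mul_card_crossEdges_add_le {k : ℤ}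
    {P : Finpartition (univ : Finset V)} (hP : IsDefAlliancePartition G k P) :
    4 * ((crossEdges G P).card : ℤ) + Fintype.card V * k ≤ 2 * G.edgeFinset.card := by
  have hvertex (v : V) : 2 * (degIn G (P.part v)ᶜ v : ℤ) + k ≤ G.degree v :=
    IsDefensiveAlliance.two_mul_degIn_compl_add_le (hP _ (P.part_mem.2 (mem_univ v)))
      (P.mem_part (mem_univ v))
  calc 4 * ((crossEdges G P).card : ℤ) + Fintype.card V * k
      = ∑ v, (2 * (degIn G (P.part v)ᶜ v : ℤ) + k) := by
        rw [sum_add_distrib, ← mul_sum, ← Nat.cast_sum, G.sum_degIn_compl_part P, sum_const,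
          card_univ, nsmul_eq_mul]
        push_cast
        ring
    _ ≤ ∑ v, (G.degree v : ℤ) := sum_le_sum fun v _ => hvertex v
    _ = 2 * G.edgeFinset.card := by exact_mod_cast G.sum_degrees_eq_twice_card_edges

end

theorem statement6_general {V : Type*} [Fintype V] [DecidableEq V]
    (G : SimpleGraph V) [DecidableRel G.Adj] (k : ℤ)
    (P : Finpartition (univ : Finset V)) (hP : IsGlobalDefAlliancePartition G k P) :
    ((crossEdges G P).card : ℚ) ≤
      (2 * (G.edgeFinset.card : ℚ) - (Fintype.card V : ℚ) * (k : ℚ)) / 4 := by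
  have hdef : IsDefAlliancePartition G k P := fun S hS => (hP S hS).1
  have hint := hdef.four_mul_card_crossEdges_add_le
  have hrat : 4 * ((crossEdges G P).card : ℚ) + Fintype.card V * k ≤ 2 * G.edgeFinset.card := by
    exact_mod_cast hint
  linarith

/-- For a partition of `Γ` (order `n`, size `m`) into `r ≥ 2` global defensive `k`-alliances,
the number `C` of edges with endpoints in different parts satisfies `C ≤ (2m - nk)/4`. -/
theorem statement6 {V : Type*} [Fintype V] [DecidableEq V]
    (G : SimpleGraph V) [DecidableRel G.Adj] (k : ℤ) (r : ℕ) (hr : 2 ≤ r)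
    (P : Finpartition (univ : Finset V)) (hP : IsGlobalDefAlliancePartition G k P)
    (hPr : P.parts.card = r) :
    ((crossEdges G P).card : ℚ) ≤
      (2 * (G.edgeFinset.card : ℚ) - (Fintype.card V : ℚ) * (k : ℚ)) / 4 :=
  statement6_general G k P hP
end

section
/- Let Γ be a simple graph of order n and size m. If Γ admits a partition of its vertex set into r ≥ 2 global defensive k-alliances all of the same cardinality, then r ≤ (2(m+n) − kn)/(2n). -/
open Finset

/-!
Every vertex `v` has a neighbor in each of the `r - 1` parts other than its own, so
`δ_{S̄}(v) ≥ r - 1`, and the alliance condition gives `δ(v) ≥ 2(r - 1) + k`. Summing over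
`V` yields `n (2(r - 1) + k) ≤ 2m`, which is the claim.
-/

namespace SimpleGraph

variable {V : Type*} [Fintype V] [DecidableEq V] (G : SimpleGraph V) [DecidableRel G.Adj]

theorem degree_eq_degIn_add_degIn_compl (S : Finset V) (v : V) :
    G.degree v = degIn G S v + degIn G Sᶜ v := by
  rw [degIn, degIn, ← card_union_of_disjoint (disjoint_filter_filter disjoint_compl_right),
    ← filter_union, union_compl, ← card_neighborFinset_eq_degree, neighborFinset_eq_filter]

theorem card_parts_le_degIn_compl_add_one {P : Finpartition (univ : Finset V)} {S : Finset V}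
    (hS : S ∈ P.parts) {v : V} (hv : v ∈ S)
    (hdom : ∀ T ∈ P.parts, v ∉ T → ∃ u ∈ T, G.Adj v u) :
    #P.parts ≤ degIn G Sᶜ v + 1 := by
  have hsurj : Set.SurjOn P.part (Sᶜ.filter (G.Adj v) : Set V) (P.parts.erase S) := by
    intro T hT
    obtain ⟨hTS, hT⟩ := mem_erase.mp hT
    have hvT : v ∉ T := fun hvT => hTS (P.eq_of_mem_parts hT hS hvT hv)
    obtain ⟨u, huT, hvu⟩ := hdom T hT hvT
    have huS : u ∉ S := fun huS => hTS (P.eq_of_mem_parts hT hS huT huS)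
    exact ⟨u, mem_filter.mpr ⟨mem_compl.mpr huS, hvu⟩, P.part_eq_of_mem hT huT⟩
  have hcard := card_le_card_of_surjOn P.part hsurj
  rw [card_erase_of_mem hS] at hcard
  exact Nat.le_add_of_sub_le hcard

theorem two_mul_card_parts_sub_one_add_le_degree {k : ℤ} {P : Finpartition (univ : Finset V)}
    (hP : IsGlobalDefAlliancePartition G k P) (v : V) :
    2 * ((#P.parts : ℤ) - 1) + k ≤ G.degree v := by
  obtain ⟨S, hS, hvS⟩ := P.exists_mem (mem_univ v)
  have hout := G.card_parts_le_degIn_compl_add_one hS hvS fun T hT hvT => (hP T hT).2 v hvT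
  have hdef := (hP S hS).1.2 v hvS
  rw [G.degree_eq_degIn_add_degIn_compl S v]
  push_cast
  omega

theorem card_mul_le_two_mul_card_edgeFinset {k : ℤ} {P : Finpartition (univ : Finset V)}
    (hP : IsGlobalDefAlliancePartition G k P) :
    (Fintype.card V : ℤ) * (2 * ((#P.parts : ℤ) - 1) + k) ≤ 2 * #G.edgeFinset := by
  calc (Fintype.card V : ℤ) * (2 * ((#P.parts : ℤ) - 1) + k)
      = ∑ _v : V, (2 * ((#P.parts : ℤ) - 1) + k) := by simp
    _ ≤ ∑ v : V, (G.degree v : ℤ) :=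
      sum_le_sum fun v _ => G.two_mul_card_parts_sub_one_add_le_degree hP v
    _ = 2 * #G.edgeFinset := by exact_mod_cast G.sum_degrees_eq_twice_card_edges

end SimpleGraph

theorem statement7_general {V : Type*} [Fintype V] [DecidableEq V]
    (G : SimpleGraph V) [DecidableRel G.Adj] (k : ℤ) (r : ℕ)
    (P : Finpartition (univ : Finset V)) (hP : IsGlobalDefAlliancePartition G k P)
    (hPr : P.parts.card = r) :
    (r : ℚ) ≤ (2 * ((G.edgeFinset.card : ℚ) + (Fintype.card V : ℚ)) -
      (k : ℚ) * (Fintype.card V : ℚ)) / (2 * (Fintype.card V : ℚ)) := by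
  subst hPr
  rcases (Fintype.card V).eq_zero_or_pos with hn | hn
  · -- no vertices means no parts, and the right-hand side is the junk value `x / 0 = 0`
    have : IsEmpty V := Fintype.card_eq_zero_iff.mp hn
    simp [P.parts_eq_empty_iff.mpr univ_eq_empty]
  · have hbound :
        (Fintype.card V : ℚ) * (2 * ((#P.parts : ℚ) - 1) + k) ≤ 2 * #G.edgeFinset := by
      exact_mod_cast G.card_mul_le_two_mul_card_edgeFinset hP
    rw [le_div_iff₀ (by positivity)]
    linarith

/-- If `Γ` (order `n`, size `m`) admits a partition into `r ≥ 2` global defensive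
`k`-alliances of equal cardinality, then `r ≤ (2(m+n) - kn)/(2n)`. -/
theorem statement7 {V : Type*} [Fintype V] [DecidableEq V]
    (G : SimpleGraph V) [DecidableRel G.Adj] (k : ℤ) (r : ℕ) (hr : 2 ≤ r)
    (P : Finpartition (univ : Finset V)) (hP : IsGlobalDefAlliancePartition G k P)
    (hPr : P.parts.card = r)
    (hequal : ∀ S ∈ P.parts, ∀ T ∈ P.parts, S.card = T.card) :
    (r : ℚ) ≤ (2 * ((G.edgeFinset.card : ℚ) + (Fintype.card V : ℚ)) -
      (k : ℚ) * (Fintype.card V : ℚ)) / (2 * (Fintype.card V : ℚ)) :=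
  statement7_general G k r P hP hPr
end

section
/- Let Γ be a simple graph admitting a partition {V_1,...,V_r} of its vertex set into r ≥ 2 global defensive k-alliances. Then for each i, the number of edges of the subgraph induced by V_i is at least (1/2) γ_k^d(Γ) (r + k − 1). -/
open Finset

/-- The number of edges of the subgraph of `G` induced by `S`, i.e. the number of edges of `G`
having both endpoints in `S`. -/
noncomputable def inducedEdgeCount {V : Type*} [Fintype V] [DecidableEq V] (G : SimpleGraph V)
    [DecidableRel G.Adj] (S : Finset V) : ℕ :=
  (@Finset.filter _ (fun e => ∀ v ∈ e, v ∈ S) (Classical.decPred _) G.edgeFinset).card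

/-!
Every vertex `v` of a part `S` is dominated by each of the other `r - 1` parts, and distinct
parts contribute distinct neighbours, so `v` has at least `r - 1` neighbours outside `S`. The
alliance condition then gives it at least `r - 1 + k` neighbours inside `S`, and the handshake
lemma for the subgraph induced by `S` yields `2 |E(S)| ≥ |S| (r - 1 + k) ≥ γₖᵈ (r - 1 + k)`
whenever `r - 1 + k ≥ 0` (otherwise the bound is trivial).
-/

section

variable {V : Type*} [Fintype V] [DecidableEq V] (G : SimpleGraph V) [DecidableRel G.Adj]

theorem inducedEdgeCount_eq_card_edgeFinset_induce (S : Finset V) :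
    inducedEdgeCount G S = #(G.induce (S : Set V)).edgeFinset := by
  rw [inducedEdgeCount, ← SimpleGraph.card_filter_edgeFinset_toFinset_subset]
  congr 1
  ext e
  simp only [mem_filter, Finset.subset_iff, Sym2.mem_toFinset]

theorem degree_induce_eq_degIn (S : Finset V) (v : (S : Set V)) :
    (G.induce (S : Set V)).degree v = degIn G S v := by
  rw [← SimpleGraph.card_neighborFinset_eq_degree,
    ← card_map (Function.Embedding.subtype (· ∈ (S : Set V)))]
  unfold degIn
  congr 1
  ext u
  simp [and_comm]

theorem sum_degIn_eq_two_mul_inducedEdgeCount (S : Finset V) :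
    ∑ v ∈ S, degIn G S v = 2 * inducedEdgeCount G S := by
  rw [inducedEdgeCount_eq_card_edgeFinset_induce, ← SimpleGraph.sum_degrees_eq_twice_card_edges,
    ← sum_coe_sort S]
  exact Fintype.sum_congr _ _ fun v => (degree_induce_eq_degIn G S v).symm

theorem card_mul_le_two_mul_inducedEdgeCount {S : Finset V} {d : ℤ}
    (h : ∀ v ∈ S, d ≤ degIn G S v) : #S * d ≤ 2 * inducedEdgeCount G S := by
  calc (#S : ℤ) * d = ∑ _ ∈ S, d := by rw [sum_const, nsmul_eq_mul]
    _ ≤ ∑ v ∈ S, (degIn G S v : ℤ) := sum_le_sum h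
    _ = 2 * inducedEdgeCount G S := mod_cast sum_degIn_eq_two_mul_inducedEdgeCount G S

/-- Sending a neighbour of `v` outside `S` to its part hits every other part. -/
theorem card_parts_le_degIn_compl_add_one {P : Finpartition (univ : Finset V)}
    (hdom : ∀ T ∈ P.parts, IsDominatingSet G T) {S : Finset V} (hS : S ∈ P.parts) {v : V}
    (hv : v ∈ S) : #P.parts ≤ degIn G Sᶜ v + 1 := by
  have hsurj : Set.SurjOn P.part (Sᶜ.filter (G.Adj v)) (P.parts.erase S) := by
    intro T hT
    obtain ⟨hTS, hT⟩ := mem_erase.mp hT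
    have hvT : v ∉ T := fun hvT => hTS (P.eq_of_mem_parts hT hS hvT hv)
    obtain ⟨u, huT, hvu⟩ := hdom T hT v hvT
    have huS : u ∉ S := fun huS => hTS (P.eq_of_mem_parts hT hS huT huS)
    exact ⟨u, by simpa [huS] using hvu, P.part_eq_of_mem hT huT⟩
  have := card_le_card_of_surjOn P.part hsurj
  rw [card_erase_of_mem hS] at this
  change #P.parts ≤ #(Sᶜ.filter (G.Adj v)) + 1
  omega

theorem le_degIn_of_isGlobalDefAlliancePartition {k : ℤ} {P : Finpartition (univ : Finset V)}
    (hP : IsGlobalDefAlliancePartition G k P) {S : Finset V} (hS : S ∈ P.parts) {v : V}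
    (hv : v ∈ S) : (#P.parts : ℤ) + k - 1 ≤ degIn G S v := by
  have hout := card_parts_le_degIn_compl_add_one G (fun T hT => (hP T hT).2) hS hv
  have hin := (hP S hS).1.2 v hv
  omega

theorem globalDefAllianceNum_le_card {k : ℤ} {S : Finset V}
    (h : IsGlobalDefensiveAlliance G k S) : globalDefAllianceNum G k ≤ #S :=
  Nat.sInf_le ⟨S, h, rfl⟩

end

theorem statement9_general {V : Type*} [Fintype V] [DecidableEq V]
    (G : SimpleGraph V) [DecidableRel G.Adj] (k : ℤ) (r : ℕ)
    (P : Finpartition (univ : Finset V)) (hP : IsGlobalDefAlliancePartition G k P)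
    (hPr : P.parts.card = r) :
    ∀ S ∈ P.parts,
      (1 / 2 : ℚ) * (globalDefAllianceNum G k : ℚ) * ((r : ℚ) + (k : ℚ) - 1) ≤
        (inducedEdgeCount G S : ℚ) := by
  intro S hS
  have hγ : (globalDefAllianceNum G k : ℚ) ≤ #S :=
    mod_cast globalDefAllianceNum_le_card G (hP S hS)
  have hedges : (#S : ℚ) * ((r : ℚ) + k - 1) ≤ 2 * inducedEdgeCount G S :=
    mod_cast card_mul_le_two_mul_inducedEdgeCount G fun v hv =>
      hPr ▸ le_degIn_of_isGlobalDefAlliancePartition G hP hS hv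
  rcases le_or_gt 0 ((r : ℚ) + k - 1) with hpos | hneg
  · nlinarith [mul_le_mul_of_nonneg_right hγ hpos]
  · have : (1 / 2 : ℚ) * globalDefAllianceNum G k * ((r : ℚ) + k - 1) ≤ 0 :=
      mul_nonpos_of_nonneg_of_nonpos (by positivity) hneg.le
    exact this.trans (Nat.cast_nonneg _)

/-- For a partition of `Γ` into `r ≥ 2` global defensive `k`-alliances, the size of the
subgraph induced by any part is at least `(1/2) γₖᵈ(Γ) (r + k - 1)`. -/
theorem statement9 {V : Type*} [Fintype V] [DecidableEq V]
    (G : SimpleGraph V) [DecidableRel G.Adj] (k : ℤ) (r : ℕ) (hr : 2 ≤ r)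
    (P : Finpartition (univ : Finset V)) (hP : IsGlobalDefAlliancePartition G k P)
    (hPr : P.parts.card = r) :
    ∀ S ∈ P.parts,
      (1 / 2 : ℚ) * (globalDefAllianceNum G k : ℚ) * ((r : ℚ) + (k : ℚ) - 1) ≤
        (inducedEdgeCount G S : ℚ) :=
  statement9_general G k r P hP hPr
end

section
/- Let Γ be a simple graph of order n. If Γ is partitionable into defensive k-alliances (i.e., ψ_k^d(Γ) ≥ 2), then a_k^d(Γ) ≥ i(Γ) + k + 1. -/
/-!
A vertex `v` of a defensive `k`-alliance `S` has at most `|S| - 1` neighbours in `S`, hence at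
most `|S| - 1 - k` neighbours outside `S`; averaging over `S`, the boundary ratio of `S` is at most
`|S| - k - 1`. Two disjoint parts of a partition into defensive `k`-alliances show that a minimum
defensive `k`-alliance has at most `n / 2` vertices, so its boundary ratio bounds `i(Γ)`.
-/

open Finset

/-- The isoperimetric number of `G`:
`i(G) = min { (∑_{v ∈ S} δ_{S̄}(v)) / |S| : ∅ ≠ S ⊆ V, |S| ≤ n/2 }`. -/
noncomputable def isoperimetricNumber {V : Type*} [Fintype V] [DecidableEq V]
    (G : SimpleGraph V) [DecidableRel G.Adj] : ℝ :=
  sInf {x : ℝ | ∃ S : Finset V, S.Nonempty ∧ 2 * S.card ≤ Fintype.card V ∧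
    x = (∑ v ∈ S, (degIn G Sᶜ v : ℝ)) / (S.card : ℝ)}

section DefensiveAlliance

variable {V : Type*} [Fintype V] [DecidableEq V] {G : SimpleGraph V} [DecidableRel G.Adj]

theorem degIn_le_card_erase (S : Finset V) (v : V) : degIn G S v ≤ #(S.erase v) :=
  card_le_card fun u hu => by
    rw [mem_filter] at hu
    exact mem_erase.mpr ⟨(G.ne_of_adj hu.2).symm, hu.1⟩

theorem IsDefensiveAlliance.degIn_compl_add_le {k : ℤ} {S : Finset V}
    (hS : IsDefensiveAlliance G k S) {v : V} (hv : v ∈ S) :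
    (degIn G Sᶜ v : ℤ) + k + 1 ≤ #S := by
  have hin : degIn G S v + 1 ≤ #S := by
    have hle := degIn_le_card_erase (G := G) S v
    rw [card_erase_of_mem hv] at hle
    have hpos := card_pos.mpr ⟨v, hv⟩
    omega
  have hdef := hS.2 v hv
  omega

theorem IsDefensiveAlliance.sum_degIn_compl_div_le {k : ℤ} {S : Finset V}
    (hS : IsDefensiveAlliance G k S) :
    (∑ v ∈ S, (degIn G Sᶜ v : ℝ)) / #S ≤ #S - k - 1 := by
  have hpos : (0 : ℝ) < #S := by exact_mod_cast card_pos.mpr hS.1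
  rw [div_le_iff₀ hpos]
  calc ∑ v ∈ S, (degIn G Sᶜ v : ℝ) ≤ ∑ _v ∈ S, ((#S : ℝ) - k - 1) :=
        sum_le_sum fun v hv => by
          have hv' : (degIn G Sᶜ v : ℝ) + k + 1 ≤ #S := by
            exact_mod_cast hS.degIn_compl_add_le hv
          linarith
    _ = (#S - k - 1) * #S := by rw [sum_const, nsmul_eq_mul, mul_comm]

theorem isoperimetricNumber_le {S : Finset V} (hS : S.Nonempty)
    (hcard : 2 * #S ≤ Fintype.card V) :
    isoperimetricNumber G ≤ (∑ v ∈ S, (degIn G Sᶜ v : ℝ)) / #S :=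
  csInf_le ⟨0, by rintro x ⟨T, -, -, rfl⟩; positivity⟩ ⟨S, hS, hcard, rfl⟩

theorem IsDefensiveAlliance.isoperimetricNumber_add_le {k : ℤ} {S : Finset V}
    (hS : IsDefensiveAlliance G k S) (hcard : 2 * #S ≤ Fintype.card V) :
    isoperimetricNumber G + k + 1 ≤ #S := by
  linarith [isoperimetricNumber_le (G := G) hS.1 hcard, hS.sum_degIn_compl_div_le]

theorem defAllianceNum_le_card {k : ℤ} {S : Finset V} (hS : IsDefensiveAlliance G k S) :
    defAllianceNum G k ≤ #S :=
  Nat.sInf_le ⟨S, hS, rfl⟩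

theorem exists_isDefensiveAlliance_card_eq_defAllianceNum {k : ℤ} {S : Finset V}
    (hS : IsDefensiveAlliance G k S) :
    ∃ T : Finset V, IsDefensiveAlliance G k T ∧ #T = defAllianceNum G k :=
  Nat.sInf_mem (s := {s | ∃ T : Finset V, IsDefensiveAlliance G k T ∧ #T = s}) ⟨#S, S, hS, rfl⟩

theorem exists_disjoint_isDefensiveAlliance_of_two_le_defPartitionNum {k : ℤ}
    (h : 2 ≤ defPartitionNum G k) :
    ∃ T₁ T₂ : Finset V, IsDefensiveAlliance G k T₁ ∧ IsDefensiveAlliance G k T₂ ∧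
      Disjoint T₁ T₂ := by
  have hne : {r : ℕ | ∃ P : Finpartition (univ : Finset V),
      IsDefAlliancePartition G k P ∧ #P.parts = r}.Nonempty := by
    by_contra hempty
    rw [Set.not_nonempty_iff_eq_empty] at hempty
    simp [defPartitionNum, hempty] at h
  have hbdd : BddAbove {r : ℕ | ∃ P : Finpartition (univ : Finset V),
      IsDefAlliancePartition G k P ∧ #P.parts = r} :=
    ⟨Fintype.card (Finset V), by rintro r ⟨P, -, rfl⟩; exact card_le_univ _⟩
  obtain ⟨P, hP, hcard⟩ := Nat.sSup_mem hne hbdd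
  obtain ⟨T₁, h₁, T₂, h₂, hT⟩ := one_lt_card.mp (by rw [hcard]; exact h)
  exact ⟨T₁, T₂, hP T₁ h₁, hP T₂ h₂, P.disjoint h₁ h₂ hT⟩

end DefensiveAlliance

/-- If `Γ` is partitionable into defensive `k`-alliances (`ψₖᵈ(Γ) ≥ 2`), then
`aₖᵈ(Γ) ≥ i(Γ) + k + 1`. -/
theorem statement12 {V : Type*} [Fintype V] [DecidableEq V]
    (G : SimpleGraph V) [DecidableRel G.Adj] (k : ℤ)
    (hpart : 2 ≤ defPartitionNum G k) :
    isoperimetricNumber G + (k : ℝ) + 1 ≤ (defAllianceNum G k : ℝ) := by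
  obtain ⟨T₁, T₂, h₁, h₂, hdisj⟩ :=
    exists_disjoint_isDefensiveAlliance_of_two_le_defPartitionNum hpart
  obtain ⟨S, hS, hScard⟩ := exists_isDefensiveAlliance_card_eq_defAllianceNum h₁
  have hhalf : 2 * #S ≤ Fintype.card V := by
    have hunion := card_le_univ (T₁ ∪ T₂)
    rw [card_union_of_disjoint hdisj] at hunion
    have hle₁ := defAllianceNum_le_card h₁
    have hle₂ := defAllianceNum_le_card h₂
    omega
  rw [← hScard]
  exact hS.isoperimetricNumber_add_le hhalf
end

section
/- Let Γ_1 and Γ_2 be simple graphs. If there exists a partition of Γ_1 into defensive k_1-alliances and a partition of Γ_2 into defensive k_2-alliances, then there exists a partition of the Cartesian product Γ_1×Γ_2 into defensive (k_1+k_2)-alliances, and ψ_{k_1+k_2}^d(Γ_1×Γ_2) ≥ ψ_{k_1}^d(Γ_1) · ψ_{k_2}^d(Γ_2). -/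
open Finset

instance {α β : Type*} [DecidableEq α] [DecidableEq β] (G : SimpleGraph α) (H : SimpleGraph β)
    [DecidableRel G.Adj] [DecidableRel H.Adj] : DecidableRel (G.boxProd H).Adj := fun _ _ =>
  decidable_of_iff' _ SimpleGraph.boxProd_adj

/-!
A neighbour of `(a, b)` in `G □ H` differs from it in exactly one coordinate, so the numbers of
neighbours of `(a, b)` inside and outside `S ×ˢ T` are the sums of those of `a` for `S` in `G` and
of `b` for `T` in `H`. Hence products of defensive `k₁`- and `k₂`-alliances are defensive
`(k₁ + k₂)`-alliances, and the pairwise products of the parts of two alliance partitions form an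
alliance partition of `G □ H` whose number of parts is the product of theirs.
-/

namespace Finpartition

variable {α β : Type*} [DecidableEq α] [DecidableEq β] {s : Finset α} {t : Finset β}

def prod (P : Finpartition s) (Q : Finpartition t) : Finpartition (s ×ˢ t) :=
  ofExistsUnique ((P.parts ×ˢ Q.parts).image fun ST => ST.1 ×ˢ ST.2)
    (by
      simp only [mem_image, mem_product, Prod.exists]
      rintro _ ⟨S, T, ⟨hS, hT⟩, rfl⟩
      exact product_subset_product (P.le hS) (Q.le hT))
    (by
      rintro ⟨a, b⟩ hab
      rw [mem_product] at hab
      refine ⟨P.part a ×ˢ Q.part b, ⟨mem_image.2 ⟨(P.part a, Q.part b), ?_, rfl⟩, ?_⟩, ?_⟩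
      · exact mem_product.2 ⟨P.part_mem.2 hab.1, Q.part_mem.2 hab.2⟩
      · exact mem_product.2 ⟨P.mem_part_self.2 hab.1, Q.mem_part_self.2 hab.2⟩
      rintro _ ⟨hW, hmem⟩
      obtain ⟨⟨S, T⟩, hST, rfl⟩ := mem_image.1 hW
      rw [mem_product] at hST hmem
      rw [P.part_eq_of_mem hST.1 hmem.1, Q.part_eq_of_mem hST.2 hmem.2])
    (by
      simp only [mem_image, mem_product, Prod.exists, not_exists, not_and]
      rintro S T ⟨hS, hT⟩
      exact ((P.nonempty_of_mem_parts hS).product (Q.nonempty_of_mem_parts hT)).ne_empty)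

lemma mem_prod_parts {P : Finpartition s} {Q : Finpartition t} {W : Finset (α × β)} :
    W ∈ (P.prod Q).parts ↔ ∃ S ∈ P.parts, ∃ T ∈ Q.parts, S ×ˢ T = W := by
  simp [prod, and_assoc]

lemma card_prod_parts (P : Finpartition s) (Q : Finpartition t) :
    #(P.prod Q).parts = #P.parts * #Q.parts := by
  rw [prod, ofExistsUnique_parts, card_image_of_injOn, card_product]
  rintro ⟨S, T⟩ hST ⟨S', T'⟩ - h
  simp only [mem_coe, mem_product] at hST
  have hne : ((S : Set α) ×ˢ (T : Set β)).Nonempty := by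
    simpa only [← coe_product, coe_nonempty] using
      (P.nonempty_of_mem_parts hST.1).product (Q.nonempty_of_mem_parts hST.2)
  have h' : (S : Set α) ×ˢ (T : Set β) = (S' : Set α) ×ˢ (T' : Set β) := by
    simpa only [← coe_product] using congrArg ((↑) : Finset (α × β) → Set (α × β)) h
  obtain ⟨hS, hT⟩ := (Set.prod_eq_prod_iff_of_nonempty hne).1 h'
  rw [coe_inj.1 hS, coe_inj.1 hT]

end Finpartition

section BoxProd

variable {α β : Type*} [Fintype α] [Fintype β] [DecidableEq α] [DecidableEq β]
  {G : SimpleGraph α} {H : SimpleGraph β} [DecidableRel G.Adj] [DecidableRel H.Adj]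

lemma degIn_boxProd {W : Finset (α × β)} {A : Finset α} {B : Finset β} {a : α} {b : β}
    (hA : ∀ x, (x, b) ∈ W ↔ x ∈ A) (hB : ∀ y, (a, y) ∈ W ↔ y ∈ B) :
    degIn (G □ H) W (a, b) = degIn G A a + degIn H B b := by
  have hdisj : Disjoint ((A.filter (G.Adj a)).map (.sectL α b))
      ((B.filter (H.Adj b)).map (.sectR a β)) := by
    simp only [disjoint_left, mem_map, mem_filter, Function.Embedding.sectL_apply,
      Function.Embedding.sectR_apply]
    rintro _ ⟨x, ⟨-, hx⟩, rfl⟩ ⟨y, -, hxy⟩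
    rw [Prod.mk.injEq] at hxy
    exact G.irrefl (hxy.1 ▸ hx)
  have hsplit : W.filter ((G □ H).Adj (a, b)) =
      ((A.filter (G.Adj a)).map (.sectL α b)).disjUnion
        ((B.filter (H.Adj b)).map (.sectR a β)) hdisj := by
    ext ⟨x, y⟩
    simp only [mem_filter, SimpleGraph.boxProd_adj, mem_disjUnion, mem_map,
      Function.Embedding.sectL_apply, Function.Embedding.sectR_apply, Prod.mk.injEq]
    constructor
    · rintro ⟨hW, ⟨hx, rfl⟩ | ⟨hy, rfl⟩⟩
      exacts [Or.inl ⟨x, ⟨(hA x).1 hW, hx⟩, rfl, rfl⟩, Or.inr ⟨y, ⟨(hB y).1 hW, hy⟩, rfl, rfl⟩]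
    · rintro (⟨x, ⟨hx, hax⟩, rfl, rfl⟩ | ⟨y, ⟨hy, hby⟩, rfl, rfl⟩)
      exacts [⟨(hA x).2 hx, Or.inl ⟨hax, rfl⟩⟩, ⟨(hB y).2 hy, Or.inr ⟨hby, rfl⟩⟩]
  rw [degIn, hsplit, card_disjUnion, card_map, card_map]
  rfl

lemma IsDefensiveAlliance.boxProd {k₁ k₂ : ℤ} {S : Finset α} {T : Finset β}
    (hS : IsDefensiveAlliance G k₁ S) (hT : IsDefensiveAlliance H k₂ T) :
    IsDefensiveAlliance (G □ H) (k₁ + k₂) (S ×ˢ T) := by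
  refine ⟨hS.1.product hT.1, ?_⟩
  rintro ⟨a, b⟩ hab
  obtain ⟨ha, hb⟩ := mem_product.1 hab
  rw [degIn_boxProd (W := S ×ˢ T) (A := S) (B := T) (by simp [hb]) (by simp [ha]),
    degIn_boxProd (W := (S ×ˢ T)ᶜ) (A := Sᶜ) (B := Tᶜ) (by simp [hb]) (by simp [ha])]
  push_cast
  linarith [hS.2 a ha, hT.2 b hb]

lemma IsDefAlliancePartition.prod {k₁ k₂ : ℤ} {P : Finpartition (univ : Finset α)}
    {Q : Finpartition (univ : Finset β)} (hP : IsDefAlliancePartition G k₁ P)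
    (hQ : IsDefAlliancePartition H k₂ Q) :
    IsDefAlliancePartition (G □ H) (k₁ + k₂) ((P.prod Q).copy univ_product_univ) := by
  intro W hW
  obtain ⟨S, hS, T, hT, rfl⟩ := Finpartition.mem_prod_parts.1 hW
  exact (hP S hS).boxProd (hQ T hT)

end BoxProd

section PartitionNum

variable {V : Type*} [Fintype V] [DecidableEq V] {G : SimpleGraph V} [DecidableRel G.Adj] {k : ℤ}

lemma bddAbove_card_defAlliancePartition :
    BddAbove {r : ℕ | ∃ P : Finpartition (univ : Finset V),
      IsDefAlliancePartition G k P ∧ #P.parts = r} := by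
  refine ⟨Fintype.card V, ?_⟩
  rintro _ ⟨P, -, rfl⟩
  exact P.card_parts_le_card

lemma IsDefAlliancePartition.card_parts_le {P : Finpartition (univ : Finset V)}
    (hP : IsDefAlliancePartition G k P) : #P.parts ≤ defPartitionNum G k :=
  le_csSup bddAbove_card_defAlliancePartition ⟨P, hP, rfl⟩

lemma exists_defAlliancePartition_card_eq
    (h : ∃ P : Finpartition (univ : Finset V), IsDefAlliancePartition G k P) :
    ∃ P : Finpartition (univ : Finset V),
      IsDefAlliancePartition G k P ∧ #P.parts = defPartitionNum G k := by
  obtain ⟨P, hP⟩ := h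
  refine Nat.sSup_mem ?_ bddAbove_card_defAlliancePartition
  exact ⟨_, P, hP, rfl⟩

end PartitionNum

/-- If there exists a partition of `Γᵢ` into defensive `kᵢ`-alliances, `i ∈ {1,2}`, then there
exists a partition of `Γ₁ × Γ₂` into defensive `(k₁+k₂)`-alliances, and
`ψ_{k₁+k₂}ᵈ(Γ₁×Γ₂) ≥ ψ_{k₁}ᵈ(Γ₁) ψ_{k₂}ᵈ(Γ₂)`. -/
theorem statement14 {α β : Type*} [Fintype α] [Fintype β] [DecidableEq α] [DecidableEq β]
    (G : SimpleGraph α) (H : SimpleGraph β) [DecidableRel G.Adj] [DecidableRel H.Adj]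
    (k₁ k₂ : ℤ)
    (h₁ : ∃ P : Finpartition (univ : Finset α), IsDefAlliancePartition G k₁ P)
    (h₂ : ∃ P : Finpartition (univ : Finset β), IsDefAlliancePartition H k₂ P) :
    (∃ Q : Finpartition (univ : Finset (α × β)),
        IsDefAlliancePartition (G.boxProd H) (k₁ + k₂) Q) ∧
      defPartitionNum G k₁ * defPartitionNum H k₂ ≤
        defPartitionNum (G.boxProd H) (k₁ + k₂) := by
  obtain ⟨P, hP, hPcard⟩ := exists_defAlliancePartition_card_eq h₁
  obtain ⟨Q, hQ, hQcard⟩ := exists_defAlliancePartition_card_eq h₂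
  refine ⟨⟨_, hP.prod hQ⟩, ?_⟩
  calc defPartitionNum G k₁ * defPartitionNum H k₂
      = #((P.prod Q).copy univ_product_univ).parts := by
        rw [Finpartition.copy_parts, Finpartition.card_prod_parts, hPcard, hQcard]
    _ ≤ _ := (hP.prod hQ).card_parts_le
end
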